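/- arXiv:1905.10809 — 4 statements merged into one kernel-verified Lean document; each statement's English description precedes it below -/
import Mathlib

section
/- Let n ≥ 1 and for each i let M_i^0, M_i^1, ..., M_i^{m_i} be integers with 0 ≤ M_i^0 < M_i^1 < ... < M_i^{m_i} ≤ T_0 (these are message birthdays, m_i = |M_i| ≥ 1). Let S be any assignment of distinct completion times S(i,j) ∈ {T_0+1,...,T_0+T} (T = Σ m_i) with S(i,1) < ... < S(i,m_i). Define Age(S) = Σ_i Σ_{t=T_0}^{T_0+T} age(S,i,t), where age(S,i,t) = t − b(lm(S,i,t)) if the latest message received by receiver i at or before t is not the last message M_i^{m_i}, and 0 otherwise (with lm(S,i,t)=M_i^0 if no message received by time t). Then Age(S) = Σ_i Σ_{j=1}^{m_i−1} (b(M_i^j) − b(M_i^{j−1}))(S(i,j) − T_0) + Σ_i (T_0 − b(M_i^{m_i−1}))(S(i,m_i) − T_0) + Σ_i [ (S(i,m_i) − T_0)^2/2 − (S(i,m_i) − T_0)/2 ]. -/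
/-- Indices of messages of a pair (with `m` messages, completion times `S`)
received at or before time `t`. -/
def received (m : ℕ) (S : ℕ → ℤ) (t : ℤ) : Finset ℕ :=
  (Finset.Icc 1 m).filter (fun j => S j ≤ t)

/-- Index of the latest message received at or before time `t`
(`0`, i.e. the initial message, if none has been received). -/
noncomputable def lm (m : ℕ) (S : ℕ → ℤ) (t : ℤ) : ℕ :=
  if h : (received m S t).Nonempty then (received m S t).max' h else 0

/-- Age of a receiver at time `t`: `t` minus the birthday of the latest
received message, except `0` once the last message (index `m`) is received. -/
noncomputable def age (m : ℕ) (b : ℕ → ℤ) (S : ℕ → ℤ) (t : ℤ) : ℤ :=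
  if lm m S t = m then 0 else t - b (lm m S t)


/-! For a single pair the age vanishes from the delivery time `σ m` of the last message on;
before it, by telescoping along the FCFS order, it equals `t - B 0` minus the birthday
increments `B j - B (j - 1)` of the messages already delivered. Summing over `t ∈ [T0, σ m)`
and exchanging the sums, the increment of message `j` is counted `σ m - σ j` times, and
`∑ (t - B 0)` is an arithmetic series. The pairs do not interact. -/

open Finset

theorem sum_Icc_one_sub_pred {G : Type*} [AddCommGroup G] (f : ℕ → G) (n : ℕ) :
    ∑ j ∈ Icc 1 n, (f j - f (j - 1)) = f n - f 0 := by
  induction n with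
  | zero => simp
  | succ n ih =>
    rw [sum_Icc_succ_top (by omega), ih, Nat.add_sub_cancel]
    abel

theorem sum_Ico_sub_const (a c B : ℤ) (hac : a ≤ c) :
    ∑ t ∈ Ico a c, (t - B) = (c - a) * (a - B) + ((c - a) ^ 2 / 2 - (c - a) / 2) := by
  have double : 2 * ∑ t ∈ Ico a c, (t - B) = 2 * ((c - a) * (a - B)) + ((c - a) ^ 2 - (c - a)) := by
    induction c, hac using Int.leInduction with
    | base => simp
    | succ c hac ih =>
      rw [Ico_add_one_right_eq_Icc, ← Ico_insert_right hac, sum_insert right_notMem_Ico,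
        mul_add, ih]
      ring
  have even : 2 ∣ (c - a) ^ 2 - (c - a) := by
    rw [sq, ← mul_sub_one]; exact (Int.even_mul_pred_self _).two_dvd
  generalize (c - a) ^ 2 = s at *
  omega

theorem sum_Ico_ite_le {R : Type*} [Ring R] (a c u : ℤ) (x : R) (hau : a ≤ u) (huc : u ≤ c) :
    ∑ t ∈ Ico a c, (if u ≤ t then x else 0) = (c - u) • x := by
  rw [← sum_filter, Ico_filter_le, max_eq_right hau, sum_const, Int.card_Ico,
    ← natCast_zsmul, Int.toNat_of_nonneg (by omega)]

section LatestMessage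

variable {m : ℕ} {σ : ℕ → ℤ} {t : ℤ}

theorem mem_received_iff {j : ℕ} : j ∈ received m σ t ↔ (1 ≤ j ∧ j ≤ m) ∧ σ j ≤ t := by
  rw [received, mem_filter, mem_Icc]

theorem received_eq_Icc_lm (hσ : MonotoneOn σ (Set.Icc 1 m)) :
    received m σ t = Icc 1 (lm m σ t) := by
  unfold lm
  split_ifs with hne
  · have hmax := mem_received_iff.mp (max'_mem _ hne)
    ext j
    rw [mem_Icc]
    refine ⟨fun hj => ⟨(mem_received_iff.mp hj).1.1, le_max' _ j hj⟩, fun ⟨h1, hjmax⟩ => ?_⟩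
    exact mem_received_iff.mpr ⟨⟨h1, hjmax.trans hmax.1.2⟩,
      (hσ ⟨h1, hjmax.trans hmax.1.2⟩ hmax.1 hjmax).trans hmax.2⟩
  · rw [not_nonempty_iff_eq_empty.mp hne]
    rfl

theorem lm_le : lm m σ t ≤ m := by
  unfold lm
  split_ifs with hne
  · exact (mem_received_iff.mp (max'_mem _ hne)).1.2
  · exact Nat.zero_le m

theorem lm_eq_self_iff (hm : 1 ≤ m) (hσ : MonotoneOn σ (Set.Icc 1 m)) :
    lm m σ t = m ↔ σ m ≤ t := by
  have h := received_eq_Icc_lm (t := t) hσ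
  constructor
  · intro hlm
    have : m ∈ received m σ t := by rw [h, hlm]; exact mem_Icc.mpr ⟨hm, le_rfl⟩
    exact (mem_received_iff.mp this).2
  · intro hσm
    have hmem : m ∈ Icc 1 (lm m σ t) := h ▸ mem_received_iff.mpr ⟨⟨hm, le_rfl⟩, hσm⟩
    exact le_antisymm lm_le (mem_Icc.mp hmem).2

theorem apply_lm_eq_add_sum {G : Type*} [AddCommGroup G] (B : ℕ → G)
    (hσ : MonotoneOn σ (Set.Icc 1 m)) (ht : t < σ m) :
    B (lm m σ t) = B 0 + ∑ j ∈ Icc 1 (m - 1), if σ j ≤ t then B j - B (j - 1) else 0 := by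
  have hfilter : (Icc 1 (m - 1)).filter (σ · ≤ t) = received m σ t := by
    ext j
    rw [mem_filter, mem_Icc, mem_received_iff]
    constructor
    · rintro ⟨⟨h1, h2⟩, h3⟩
      exact ⟨⟨h1, by omega⟩, h3⟩
    · rintro ⟨⟨h1, h2⟩, h3⟩
      have : j ≠ m := by rintro rfl; exact absurd h3 (not_le.mpr ht)
      exact ⟨⟨h1, by omega⟩, h3⟩
  rw [← sum_filter, hfilter, received_eq_Icc_lm hσ, sum_Icc_one_sub_pred]
  abel

theorem sum_age_Icc (B : ℕ → ℤ) {T0 T1 : ℤ} (hm : 1 ≤ m) (hσ : MonotoneOn σ (Set.Icc 1 m))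
    (hT0 : T0 < σ 1) (hT1 : σ m ≤ T1) :
    ∑ t ∈ Icc T0 T1, age m B σ t
      = (∑ j ∈ Icc 1 (m - 1), (B j - B (j - 1)) * (σ j - T0))
        + (T0 - B (m - 1)) * (σ m - T0)
        + ((σ m - T0) ^ 2 / 2 - (σ m - T0) / 2) := by
  have hT0m : T0 < σ m := hT0.trans_le (hσ ⟨le_rfl, hm⟩ ⟨hm, le_rfl⟩ hm)
  have hσj : ∀ j ∈ Icc 1 (m - 1), T0 ≤ σ j ∧ σ j ≤ σ m := fun j hj => by
    obtain ⟨h1, h2⟩ := mem_Icc.mp hj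
    exact ⟨hT0.le.trans (hσ ⟨le_rfl, hm⟩ ⟨h1, by omega⟩ h1),
      hσ ⟨h1, by omega⟩ ⟨hm, le_rfl⟩ (by omega)⟩
  have split : ∑ t ∈ Icc T0 T1, age m B σ t
      = ∑ t ∈ Ico T0 (σ m), age m B σ t + ∑ t ∈ Icc (σ m) T1, age m B σ t := by
    rw [← Ico_add_one_right_eq_Icc, ← Ico_add_one_right_eq_Icc,
      ← Ico_union_Ico_eq_Ico hT0m.le (by omega), sum_union (Ico_disjoint_Ico_consecutive _ _ _)]
  have age_after : ∀ t ∈ Icc (σ m) T1, age m B σ t = 0 := fun t ht => by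
    rw [age, if_pos ((lm_eq_self_iff hm hσ).mpr (mem_Icc.mp ht).1)]
  have age_before : ∀ t ∈ Ico T0 (σ m), age m B σ t
      = (t - B 0) - ∑ j ∈ Icc 1 (m - 1), if σ j ≤ t then B j - B (j - 1) else 0 := fun t ht => by
    have ht : t < σ m := (mem_Ico.mp ht).2
    rw [age, if_neg (mt (lm_eq_self_iff hm hσ).mp (not_le.mpr ht)), apply_lm_eq_add_sum B hσ ht]
    abel
  have swap : ∑ t ∈ Ico T0 (σ m), ∑ j ∈ Icc 1 (m - 1), (if σ j ≤ t then B j - B (j - 1) else 0)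
      = ∑ j ∈ Icc 1 (m - 1), (B j - B (j - 1)) * (σ m - σ j) := by
    rw [sum_comm]
    refine sum_congr rfl fun j hj => ?_
    rw [sum_Ico_ite_le _ _ _ _ (hσj j hj).1 (hσj j hj).2, smul_eq_mul, mul_comm]
  have telescope : ∑ j ∈ Icc 1 (m - 1), (B j - B (j - 1)) * (σ m - σ j)
      = (B (m - 1) - B 0) * (σ m - T0) - ∑ j ∈ Icc 1 (m - 1), (B j - B (j - 1)) * (σ j - T0) := by
    rw [← sum_Icc_one_sub_pred, sum_mul, ← sum_sub_distrib]
    exact sum_congr rfl fun j _ => by ring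
  rw [split, sum_congr rfl age_before, sum_eq_zero age_after, add_zero, sum_sub_distrib, swap,
    telescope, sum_Ico_sub_const _ _ _ hT0m.le]
  ring

end LatestMessage

theorem minAge_geometric_identity_general
    (n : ℕ) (m : Fin n → ℕ) (hm : ∀ i, 1 ≤ m i)
    (b : Fin n → ℕ → ℤ) (T0 : ℤ)
    (T : ℕ)
    (S : Fin n → ℕ → ℤ)
    (hrange : ∀ i j, 1 ≤ j → j ≤ m i → S i j ∈ Finset.Icc (T0 + 1) (T0 + T))
    (hord : ∀ i j, 1 ≤ j → j < m i → S i j < S i (j + 1)) :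
    ∑ i, ∑ t ∈ Finset.Icc T0 (T0 + T), age (m i) (b i) (S i) t
      = (∑ i, ∑ j ∈ Finset.Icc 1 (m i - 1), (b i j - b i (j - 1)) * (S i j - T0))
        + (∑ i, (T0 - b i (m i - 1)) * (S i (m i) - T0))
        + (∑ i, ((S i (m i) - T0) ^ 2 / 2 - (S i (m i) - T0) / 2)) := by
  rw [← sum_add_distrib, ← sum_add_distrib]
  refine sum_congr rfl fun i _ => sum_age_Icc (b i) (hm i) ?_ ?_ ?_
  · refine monotoneOn_of_le_succ Set.ordConnected_Icc fun j _ hj hj' => ?_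
    rw [Order.succ_eq_add_one] at hj' ⊢
    exact (hord i j hj.1 hj'.2).le
  · exact (mem_Icc.mp (hrange i 1 le_rfl (hm i))).1
  · exact (mem_Icc.mp (hrange i (m i) (hm i) le_rfl)).2

theorem minAge_geometric_identity
    (n : ℕ) (hn : 1 ≤ n) (m : Fin n → ℕ) (hm : ∀ i, 1 ≤ m i)
    (b : Fin n → ℕ → ℤ) (T0 : ℤ)
    (hb0 : ∀ i, 0 ≤ b i 0)
    (hbmono : ∀ i, ∀ j < m i, b i j < b i (j + 1))
    (hbT0 : ∀ i, b i (m i) ≤ T0)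
    (T : ℕ) (hT : T = ∑ i, m i)
    (S : Fin n → ℕ → ℤ)
    (hrange : ∀ i j, 1 ≤ j → j ≤ m i → S i j ∈ Finset.Icc (T0 + 1) (T0 + T))
    (hinj : ∀ i j i' j', 1 ≤ j → j ≤ m i → 1 ≤ j' → j' ≤ m i' →
      S i j = S i' j' → i = i' ∧ j = j')
    (hord : ∀ i j, 1 ≤ j → j < m i → S i j < S i (j + 1)) :
    ∑ i, ∑ t ∈ Finset.Icc T0 (T0 + T), age (m i) (b i) (S i) t
      = (∑ i, ∑ j ∈ Finset.Icc 1 (m i - 1), (b i j - b i (j - 1)) * (S i j - T0))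
        + (∑ i, (T0 - b i (m i - 1)) * (S i (m i) - T0))
        + (∑ i, ((S i (m i) - T0) ^ 2 / 2 - (S i (m i) - T0) / 2)) :=
  minAge_geometric_identity_general n m hm b T0 T S hrange hord
end

section
/- Let I_age and I_job be a Min-Age instance and its corresponding Min-WCS instance under the transformation w_i^j = 2(b(M_i^j) − b(M_i^{j−1})) for j < |C_i| and w_i^{|C_i|} = 2(T_0 − 1/2 − b(M_i^{m_i−1})). If S*_age minimizes Age over feasible schedules of I_age and S*_job minimizes wcs over feasible schedules of I_job, then 2·Age(S*_age) = wcs(S*_job). -/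
/-- Overall age of a Min-Age schedule. -/
noncomputable def Age (n : ℕ) (m : Fin n → ℕ) (b : Fin n → ℕ → ℤ) (T0 : ℤ) (T : ℕ)
    (S : Fin n → ℕ → ℤ) : ℤ :=
  ∑ i, ∑ t ∈ Finset.Icc T0 (T0 + T), age (m i) (b i) (S i) t

/-- Feasibility of a Min-Age schedule: a bijection from the messages onto
`{T0+1, …, T0+T}` that is FCFS within each pair. -/
def AgeFeasible (n : ℕ) (m : Fin n → ℕ) (T0 : ℤ) (T : ℕ) (S : Fin n → ℕ → ℤ) : Prop :=
  (∀ i j, 1 ≤ j → j ≤ m i → S i j ∈ Finset.Icc (T0 + 1) (T0 + T)) ∧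
  (∀ i j i' j', 1 ≤ j → j ≤ m i → 1 ≤ j' → j' ≤ m i' →
    S i j = S i' j' → i = i' ∧ j = j') ∧
  (∀ t ∈ Finset.Icc (T0 + 1) (T0 + T), ∃ i j, 1 ≤ j ∧ j ≤ m i ∧ S i j = t) ∧
  (∀ i j, 1 ≤ j → j < m i → S i j < S i (j + 1))

/-- Feasibility of a Min-WCS schedule: a bijection from the jobs onto
`{1, …, T}` respecting chain precedence. -/
def JobFeasible (n : ℕ) (m : Fin n → ℕ) (T : ℕ) (S : Fin n → ℕ → ℕ) : Prop :=
  (∀ i j, 1 ≤ j → j ≤ m i → S i j ∈ Finset.Icc 1 T) ∧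
  (∀ i j i' j', 1 ≤ j → j ≤ m i → 1 ≤ j' → j' ≤ m i' →
    S i j = S i' j' → i = i' ∧ j = j') ∧
  (∀ t ∈ Finset.Icc 1 T, ∃ i j, 1 ≤ j ∧ j ≤ m i ∧ S i j = t) ∧
  (∀ i j, 1 ≤ j → j < m i → S i j < S i (j + 1))

/-- Objective of the Min-WCS problem. -/
def wcs (n : ℕ) (m : Fin n → ℕ) (w : Fin n → ℕ → ℤ) (S : Fin n → ℕ → ℕ) : ℤ :=
  (∑ i, ∑ j ∈ Finset.Icc 1 (m i), w i j * (S i j : ℤ))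
    + ∑ i, (S i (m i) : ℤ) * (S i (m i) : ℤ)


-- Gauss sum on integer Icc
lemma sum_Icc_int (a : ℤ) : ∀ c : ℤ, a - 1 ≤ c →
    2 * ∑ t ∈ Finset.Icc a c, t = (c - a + 1) * (a + c) := by
  refine Int.le_induction ?_ ?_
  · rw [Finset.Icc_eq_empty (by omega)]
    simp
  · intro c hc ih
    have h1 : Finset.Icc a (c + 1) = insert (c + 1) (Finset.Icc a c) := by
      ext x; simp only [Finset.mem_insert, Finset.mem_Icc]; omega
    rw [h1, Finset.sum_insert (by simp), mul_add, ih]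
    ring

lemma sum_Icc_sub (a c B : ℤ) (h : a ≤ c) :
    2 * ∑ t ∈ Finset.Icc a (c - 1), (t - B) = (c - a) * (a + c - 1 - 2 * B) := by
  rw [Finset.sum_sub_distrib, Finset.sum_const, mul_sub]
  rw [sum_Icc_int a (c - 1) (by omega)]
  have hcard : ((Finset.Icc a (c - 1)).card : ℤ) = c - a := by
    rw [Int.card_Icc]; omega
  rw [nsmul_eq_mul, ← mul_assoc, mul_comm (2:ℤ) ((Finset.Icc a (c-1)).card : ℤ), hcard]
  ring

lemma lm_le_s2 (M : ℕ) (S : ℕ → ℤ) (t : ℤ) : lm M S t ≤ M := by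
  unfold lm
  split
  · next h =>
    have := Finset.max'_mem _ h
    exact (Finset.mem_Icc.mp (Finset.mem_filter.mp this).1).2
  · exact Nat.zero_le _

lemma lm_zero (S : ℕ → ℤ) (t : ℤ) : lm 0 S t = 0 := by
  unfold lm received; simp

lemma lm_eq_self (M : ℕ) (hM : 1 ≤ M) (S : ℕ → ℤ) (t : ℤ) :
    lm M S t = M ↔ S M ≤ t := by
  constructor
  · intro h
    unfold lm at h
    split at h
    · next hne =>
      have := Finset.max'_mem _ hne
      rw [h] at this
      exact (Finset.mem_filter.mp this).2
    · omega
  · intro h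
    have hmem : M ∈ received M S t :=
      Finset.mem_filter.mpr ⟨Finset.mem_Icc.mpr ⟨hM, le_refl M⟩, h⟩
    unfold lm
    rw [dif_pos ⟨M, hmem⟩]
    refine le_antisymm (Finset.max'_le _ _ _ ?_) (Finset.le_max' _ _ hmem)
    intro y hy
    exact (Finset.mem_Icc.mp (Finset.mem_filter.mp hy).1).2

lemma age_succ (M : ℕ) (b S : ℕ → ℤ) (t : ℤ) (hmono : M = 0 ∨ S M ≤ S (M+1)) :
    age (M+1) b S t
      = age M b S t + (if lm M S t = M ∧ t < S (M+1) then t - b M else 0) := by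
  by_cases ht : S (M+1) ≤ t
  · -- lm (M+1) = M+1, age = 0 ; age M = 0
    have h1 : lm (M+1) S t = M+1 := (lm_eq_self (M+1) (by omega) S t).mpr ht
    have h2 : lm M S t = M := by
      rcases Nat.eq_zero_or_pos M with h0 | h0
      · rw [h0]; exact lm_zero S t
      · exact (lm_eq_self M h0 S t).mpr (le_trans (hmono.resolve_left (by omega)) ht)
    rw [age, age, if_pos h1, if_pos h2, if_neg (by omega)]
    ring
  · -- t < S (M+1) : received (M+1) = received M
    push_neg at ht
    have hrec : received (M+1) S t = received M S t := by
      ext x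
      simp only [received, Finset.mem_filter, Finset.mem_Icc]
      constructor
      · rintro ⟨⟨h1, h2⟩, h3⟩
        refine ⟨⟨h1, ?_⟩, h3⟩
        rcases Nat.lt_or_ge x (M+1) with h | h
        · omega
        · exfalso; have : x = M + 1 := by omega
          subst this; exact absurd h3 (not_le.mpr ht)
      · rintro ⟨⟨h1, h2⟩, h3⟩
        exact ⟨⟨h1, by omega⟩, h3⟩
    have hlm : lm (M+1) S t = lm M S t := by unfold lm; rw [hrec]
    have hle : lm M S t ≤ M := lm_le_s2 M S t
    rw [age, age, hlm, if_neg (by omega)]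
    by_cases hM : lm M S t = M
    · rw [if_pos hM, if_pos ⟨hM, ht⟩, hM]; ring
    · rw [if_neg hM, if_neg (by tauto)]; ring

lemma ageSum (T0 : ℤ) (T : ℕ) (b S : ℕ → ℤ) :
    ∀ M, 1 ≤ M →
    (∀ j, 1 ≤ j → j ≤ M → T0 + 1 ≤ S j ∧ S j ≤ T0 + T) →
    (∀ j, 1 ≤ j → j < M → S j < S (j + 1)) →
    2 * ∑ t ∈ Finset.Icc T0 (T0 + T), age M b S t
      = (2 * T0 - 1 - 2 * b (M - 1)) * (S M - T0) + (S M - T0) * (S M - T0)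
        + ∑ j ∈ Finset.Icc 1 (M - 1), 2 * (b j - b (j - 1)) * (S j - T0) := by
  refine Nat.le_induction ?_ ?_
  · intro hrange hmono
    obtain ⟨h1, h2⟩ := hrange 1 le_rfl le_rfl
    have hsum : ∑ t ∈ Finset.Icc T0 (T0 + T), age 1 b S t
        = ∑ t ∈ Finset.Icc T0 (S 1 - 1), (t - b 0) := by
      have hsplit : ∀ t ∈ Finset.Icc T0 (T0 + T),
          age 1 b S t = if t < S 1 then t - b 0 else 0 := by
        intro t ht
        rw [age_succ 0 b S t (Or.inl rfl)]
        have h0 : age 0 b S t = 0 := by rw [age, lm_zero, if_pos rfl]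
        rw [h0, lm_zero]
        by_cases h : t < S 1
        · rw [if_pos ⟨rfl, h⟩, if_pos h]; ring
        · rw [if_neg (by tauto), if_neg h]; ring
      rw [Finset.sum_congr rfl hsplit, Finset.sum_ite, Finset.sum_const_zero, add_zero]
      congr 1
      ext x
      simp only [Finset.mem_filter, Finset.mem_Icc]
      omega
    rw [hsum, sum_Icc_sub T0 (S 1) (b 0) (by omega)]
    simp only [Nat.sub_self]
    rw [Finset.Icc_eq_empty (by omega), Finset.sum_empty]
    ring
  · intro M hM ih hrange hmono
    have ihh := ih (fun j h1 h2 => hrange j h1 (by omega))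
      (fun j h1 h2 => hmono j h1 (by omega))
    obtain ⟨hA, hB⟩ := hrange M (by omega) (by omega)
    obtain ⟨hA', hB'⟩ := hrange (M+1) (by omega) le_rfl
    have hstep : S M < S (M + 1) := hmono M hM (by omega)
    have hsum : ∑ t ∈ Finset.Icc T0 (T0 + T), age (M+1) b S t
        = ∑ t ∈ Finset.Icc T0 (T0 + T), age M b S t
          + ∑ t ∈ Finset.Icc (S M) (S (M+1) - 1), (t - b M) := by
      have hsplit : ∀ t ∈ Finset.Icc T0 (T0 + T),
          age (M+1) b S t = age M b S t
            + (if lm M S t = M ∧ t < S (M+1) then t - b M else 0) := by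
        intro t ht
        exact age_succ M b S t (Or.inr (le_of_lt hstep))
      rw [Finset.sum_congr rfl hsplit, Finset.sum_add_distrib]
      congr 1
      rw [Finset.sum_ite, Finset.sum_const_zero, add_zero]
      congr 1
      ext x
      simp only [Finset.mem_filter, Finset.mem_Icc]
      constructor
      · rintro ⟨⟨h1, h2⟩, h3, h4⟩
        have := (lm_eq_self M hM S x).mp h3
        omega
      · rintro ⟨h1, h2⟩
        have hx : S M ≤ x := h1
        refine ⟨⟨by omega, by omega⟩, (lm_eq_self M hM S x).mpr hx, by omega⟩
    have hIccsplit : ∑ j ∈ Finset.Icc 1 (M + 1 - 1), 2 * (b j - b (j - 1)) * (S j - T0)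
        = ∑ j ∈ Finset.Icc 1 (M - 1), 2 * (b j - b (j - 1)) * (S j - T0)
          + 2 * (b M - b (M - 1)) * (S M - T0) := by
      have h1 : Finset.Icc 1 (M + 1 - 1) = insert M (Finset.Icc 1 (M - 1)) := by
        ext x; simp only [Finset.mem_insert, Finset.mem_Icc]; omega
      rw [h1, Finset.sum_insert (by simp only [Finset.mem_Icc]; omega)]
      ring
    rw [hsum, mul_add, ihh, sum_Icc_sub (S M) (S (M+1)) (b M) (le_of_lt hstep), hIccsplit]
    have hMM : M + 1 - 1 = M := by omega
    rw [hMM]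
    ring

lemma corr (n : ℕ) (m : Fin n → ℕ) (hm : ∀ i, 1 ≤ m i) (b : Fin n → ℕ → ℤ)
    (T0 : ℤ) (T : ℕ) (w : Fin n → ℕ → ℤ)
    (hw_int : ∀ i j, 1 ≤ j → j < m i → w i j = 2 * (b i j - b i (j - 1)))
    (hw_leaf : ∀ i, w i (m i) = 2 * T0 - 1 - 2 * b i (m i - 1))
    (SA : Fin n → ℕ → ℤ) (SJ : Fin n → ℕ → ℕ)
    (hAF : AgeFeasible n m T0 T SA)
    (hrel : ∀ i j, 1 ≤ j → j ≤ m i → SA i j = (SJ i j : ℤ) + T0) :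
    2 * Age n m b T0 T SA = wcs n m w SJ := by
  obtain ⟨hrange, _, _, hmono⟩ := hAF
  rw [Age, Finset.mul_sum, wcs, ← Finset.sum_add_distrib]
  apply Finset.sum_congr rfl
  intro i _
  have hkey := ageSum T0 T (b i) (SA i) (m i) (hm i)
    (fun j h1 h2 => by
      have := Finset.mem_Icc.mp (hrange i j h1 h2); exact this)
    (fun j h1 h2 => hmono i j h1 h2)
  rw [hkey]
  have hmlast : SA i (m i) - T0 = (SJ i (m i) : ℤ) := by
    rw [hrel i (m i) (hm i) le_rfl]; ring
  have hIccsplit : Finset.Icc 1 (m i) = insert (m i) (Finset.Icc 1 (m i - 1)) := by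
    have := hm i
    ext x; simp only [Finset.mem_insert, Finset.mem_Icc]; omega
  rw [hIccsplit, Finset.sum_insert (by simp only [Finset.mem_Icc]; omega)]
  have hsum : ∑ j ∈ Finset.Icc 1 (m i - 1), 2 * (b i j - b i (j - 1)) * (SA i j - T0)
      = ∑ j ∈ Finset.Icc 1 (m i - 1), w i j * (SJ i j : ℤ) := by
    apply Finset.sum_congr rfl
    intro j hj
    simp only [Finset.mem_Icc] at hj
    rw [hw_int i j hj.1 (by omega), hrel i j hj.1 (by omega)]
    ring
  rw [hsum, hw_leaf i, hmlast]
  ring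

lemma job_to_age (n : ℕ) (m : Fin n → ℕ) (T0 : ℤ) (T : ℕ) (SJ : Fin n → ℕ → ℕ)
    (h : JobFeasible n m T SJ) :
    AgeFeasible n m T0 T (fun i j => (SJ i j : ℤ) + T0) := by
  obtain ⟨h1, h2, h3, h4⟩ := h
  refine ⟨?_, ?_, ?_, ?_⟩
  · intro i j hj1 hj2
    have := Finset.mem_Icc.mp (h1 i j hj1 hj2)
    simp only [Finset.mem_Icc]
    omega
  · intro i j i' j' hj1 hj2 hj3 hj4 heq
    simp only [add_left_inj, Nat.cast_inj] at heq
    exact h2 i j i' j' hj1 hj2 hj3 hj4 heq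
  · intro t ht
    simp only [Finset.mem_Icc] at ht
    obtain ⟨i, j, hj1, hj2, hj3⟩ := h3 (t - T0).toNat
      (by simp only [Finset.mem_Icc]; omega)
    refine ⟨i, j, hj1, hj2, ?_⟩
    simp only [hj3]
    omega
  · intro i j hj1 hj2
    have := h4 i j hj1 hj2
    simp only [add_lt_add_iff_right, Nat.cast_lt]
    exact this

lemma age_to_job (n : ℕ) (m : Fin n → ℕ) (T0 : ℤ) (T : ℕ) (SA : Fin n → ℕ → ℤ)
    (h : AgeFeasible n m T0 T SA) :
    JobFeasible n m T (fun i j => (SA i j - T0).toNat) := by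
  obtain ⟨h1, h2, h3, h4⟩ := h
  have hr : ∀ i j, 1 ≤ j → j ≤ m i → T0 + 1 ≤ SA i j ∧ SA i j ≤ T0 + T := by
    intro i j hj1 hj2
    exact Finset.mem_Icc.mp (h1 i j hj1 hj2)
  refine ⟨?_, ?_, ?_, ?_⟩
  · intro i j hj1 hj2
    obtain ⟨ha, hb⟩ := hr i j hj1 hj2
    simp only [Finset.mem_Icc]
    omega
  · intro i j i' j' hj1 hj2 hj3 hj4 heq
    obtain ⟨ha, _⟩ := hr i j hj1 hj2
    obtain ⟨ha', _⟩ := hr i' j' hj3 hj4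
    have heq' : (SA i j - T0).toNat = (SA i' j' - T0).toNat := heq
    exact h2 i j i' j' hj1 hj2 hj3 hj4 (by omega)
  · intro t ht
    simp only [Finset.mem_Icc] at ht
    obtain ⟨i, j, hj1, hj2, hj3⟩ := h3 (T0 + t)
      (by simp only [Finset.mem_Icc]; omega)
    exact ⟨i, j, hj1, hj2, by simp only [hj3]; omega⟩
  · intro i j hj1 hj2
    have hlt := h4 i j hj1 hj2
    obtain ⟨ha, _⟩ := hr i j hj1 (by omega)
    obtain ⟨ha', _⟩ := hr i (j+1) (by omega) (by omega)
    show (SA i j - T0).toNat < (SA i (j+1) - T0).toNat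
    omega

theorem minAge_minWCS_optima_equal
    (n : ℕ) (m : Fin n → ℕ) (hm : ∀ i, 1 ≤ m i)
    (b : Fin n → ℕ → ℤ) (T0 : ℤ)
    (hb0 : ∀ i, 0 ≤ b i 0)
    (hbmono : ∀ i, ∀ j < m i, b i j < b i (j + 1))
    (hbT0 : ∀ i, b i (m i) ≤ T0)
    (T : ℕ) (hT : T = ∑ i, m i)
    (w : Fin n → ℕ → ℤ)
    (hw_int : ∀ i j, 1 ≤ j → j < m i → w i j = 2 * (b i j - b i (j - 1)))
    (hw_leaf : ∀ i, w i (m i) = 2 * T0 - 1 - 2 * b i (m i - 1))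
    (Sage : Fin n → ℕ → ℤ) (Sjob : Fin n → ℕ → ℕ)
    (hSageFeas : AgeFeasible n m T0 T Sage)
    (hSageOpt : ∀ S, AgeFeasible n m T0 T S → Age n m b T0 T Sage ≤ Age n m b T0 T S)
    (hSjobFeas : JobFeasible n m T Sjob)
    (hSjobOpt : ∀ S, JobFeasible n m T S → wcs n m w Sjob ≤ wcs n m w S) :
    2 * Age n m b T0 T Sage = wcs n m w Sjob := by
  set S1 : Fin n → ℕ → ℤ := fun i j => (Sjob i j : ℤ) + T0 with hS1
  set S2 : Fin n → ℕ → ℕ := fun i j => (Sage i j - T0).toNat with hS2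
  have hS1F : AgeFeasible n m T0 T S1 := job_to_age n m T0 T Sjob hSjobFeas
  have hS2F : JobFeasible n m T S2 := age_to_job n m T0 T Sage hSageFeas
  have e1 : 2 * Age n m b T0 T S1 = wcs n m w Sjob :=
    corr n m hm b T0 T w hw_int hw_leaf S1 Sjob hS1F (fun i j _ _ => rfl)
  have e2 : 2 * Age n m b T0 T Sage = wcs n m w S2 := by
    refine corr n m hm b T0 T w hw_int hw_leaf Sage S2 hSageFeas ?_
    intro i j hj1 hj2
    have := Finset.mem_Icc.mp (hSageFeas.1 i j hj1 hj2)
    simp only [hS2]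
    omega
  have le1 : Age n m b T0 T Sage ≤ Age n m b T0 T S1 := hSageOpt S1 hS1F
  have le2 : wcs n m w Sjob ≤ wcs n m w S2 := hSjobOpt S2 hS2F
  linarith
end

section
/- Combination lemma for interleaved schedules: let S_cs^int and S_wc^int be two injective assignments of jobs to positive integer times with disjoint images, each respecting chain precedence (S(J_i^a) < S(J_i^b) whenever a < b within the same chain). Suppose moreover that S_wc^int respects the same total completion order on each chain as some precedence-feasible schedule. Then S'(J) = min{S_cs^int(J), S_wc^int(J)} is injective and respects chain precedence: for all chains i and a < b, S'(J_i^a) < S'(J_i^b). -/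
/-- Combination lemma for interleaved schedules (Lemma 6 of the paper).
Jobs are `(i, j)` with `1 ≤ j ≤ L i`; `Scs` and `Swc` are injective assignments
of jobs to positive integer times whose images are disjoint, each respecting
chain precedence. Then the pointwise minimum `S'` is injective and respects
chain precedence. -/
theorem interleaving_min_feasible
    (n : ℕ) (L : Fin n → ℕ)
    (Scs Swc : Fin n → ℕ → ℕ)
    (hposcs : ∀ i j, 1 ≤ j → j ≤ L i → 1 ≤ Scs i j)
    (hposwc : ∀ i j, 1 ≤ j → j ≤ L i → 1 ≤ Swc i j)
    (hinjcs : ∀ i j i' j', 1 ≤ j → j ≤ L i → 1 ≤ j' → j' ≤ L i' →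
      Scs i j = Scs i' j' → i = i' ∧ j = j')
    (hinjwc : ∀ i j i' j', 1 ≤ j → j ≤ L i → 1 ≤ j' → j' ≤ L i' →
      Swc i j = Swc i' j' → i = i' ∧ j = j')
    (hdisj : ∀ i j i' j', 1 ≤ j → j ≤ L i → 1 ≤ j' → j' ≤ L i' →
      Scs i j ≠ Swc i' j')
    (hpreccs : ∀ i, ∀ a b, 1 ≤ a → a < b → b ≤ L i → Scs i a < Scs i b)
    (hprecwc : ∀ i, ∀ a b, 1 ≤ a → a < b → b ≤ L i → Swc i a < Swc i b)
    (S' : Fin n → ℕ → ℕ)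
    (hS' : ∀ i j, S' i j = min (Scs i j) (Swc i j)) :
    (∀ i j i' j', 1 ≤ j → j ≤ L i → 1 ≤ j' → j' ≤ L i' →
      S' i j = S' i' j' → i = i' ∧ j = j') ∧
    (∀ i, ∀ a b, 1 ≤ a → a < b → b ≤ L i → S' i a < S' i b) := by
  constructor
  · intro i j i' j' h1 h2 h3 h4 heq
    rw [hS' i j, hS' i' j'] at heq
    rcases min_cases (Scs i j) (Swc i j) with ⟨e1, _⟩ | ⟨e1, _⟩ <;>
      rcases min_cases (Scs i' j') (Swc i' j') with ⟨e2, _⟩ | ⟨e2, _⟩ <;>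
        rw [e1, e2] at heq
    · exact hinjcs i j i' j' h1 h2 h3 h4 heq
    · exact absurd heq (hdisj i j i' j' h1 h2 h3 h4)
    · exact absurd heq.symm (hdisj i' j' i j h3 h4 h1 h2)
    · exact hinjwc i j i' j' h1 h2 h3 h4 heq
  · intro i a b h1 h2 h3
    rw [hS' i a, hS' i b]
    have hcs := hpreccs i a b h1 h2 h3
    have hwc := hprecwc i a b h1 h2 h3
    exact lt_min (lt_of_le_of_lt (min_le_left _ _) hcs)
      (lt_of_le_of_lt (min_le_right _ _) hwc)
end

section
/- If every sender in the Min-Age problem has exactly one message (|M_i| = 1 for all i), then in the corresponding Min-WCS instance every chain has one job, cs is the same constant Σ_{t=1}^n t^2 for all feasible schedules, and the Min-Age problem is solved optimally by transmitting messages in nonincreasing order of w_i = 2(T_0 − 1/2 − b(M_i^0)), i.e., in nondecreasing order of b(M_i^0): the schedule sending messages in nondecreasing order of the initial birthday b(M_i^0) minimizes the overall age. -/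
/-! A feasible schedule `S` is a bijection onto `{T0+1, …, T0+n}`, so every quantity of the form
`∑ i, g (S i)` is the same for all of them. Receiver `i` contributes `∑_{T0 ≤ t < S i} t` minus
`(S i - T0) * b0 i` to the age, hence `Age1 S = C - ∑ i, b0 i * S i` with `C` independent of `S`.
Minimising the age thus means maximising `∑ i, b0 i * S i`, which by the rearrangement inequality
is achieved when `S` and `b0` are ordered alike. -/

/-- Feasible Min-Age schedule when each pair has a single message: a bijection
from the `n` messages onto `{T0+1, …, T0+n}`. -/
def AgeFeas1 (n : ℕ) (T0 : ℤ) (S : Fin n → ℤ) : Prop :=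
  (∀ i, S i ∈ Finset.Icc (T0 + 1) (T0 + n)) ∧ Function.Injective S ∧
  (∀ t ∈ Finset.Icc (T0 + 1) (T0 + (n : ℤ)), ∃ i, S i = t)

/-- Overall age: receiver `i` has age `t - b0 i` until it receives its single
message (at time `S i`) and age `0` thereafter. -/
noncomputable def Age1 (n : ℕ) (T0 : ℤ) (b0 : Fin n → ℤ) (S : Fin n → ℤ) : ℤ :=
  ∑ i, ∑ t ∈ Finset.Icc T0 (T0 + (n : ℤ)), if S i ≤ t then 0 else t - b0 i

/-- Feasible job schedule for `n` single-job chains: a bijection onto `{1, …, n}`. -/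
def JobFeas1 (n : ℕ) (S : Fin n → ℕ) : Prop :=
  (∀ i, S i ∈ Finset.Icc 1 n) ∧ Function.Injective S ∧
  (∀ t ∈ Finset.Icc 1 n, ∃ i, S i = t)

open Finset

theorem Finset.sum_comp_eq_sum_of_bijective_onto {ι α M : Type*} [Fintype ι] [AddCommMonoid M]
    {S : ι → α} {I : Finset α} (hmem : ∀ i, S i ∈ I) (hinj : Function.Injective S)
    (hsurj : ∀ t ∈ I, ∃ i, S i = t) (g : α → M) :
    ∑ i, g (S i) = ∑ t ∈ I, g t :=
  sum_nbij S (fun i _ => hmem i) hinj.injOn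
    (fun t ht => by simpa using hsurj t ht) (fun _ _ => rfl)

theorem Equiv.Perm.exists_comp_eq_of_injective {ι α : Type*} [Finite ι] {f g : ι → α}
    (hg : Function.Injective g) (h : ∀ i, ∃ j, f j = g i) :
    ∃ σ : Equiv.Perm ι, ∀ i, f (σ i) = g i := by
  choose τ hτ using h
  have hτ_inj : Function.Injective τ := fun i k hik => hg (by rw [← hτ i, ← hτ k, hik])
  exact ⟨Equiv.ofBijective τ (Finite.injective_iff_bijective.mp hτ_inj), hτ⟩

theorem sum_Icc_ite_le_eq {a N s b : ℤ} (has : a ≤ s) (hsN : s ≤ N + 1) :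
    ∑ t ∈ Icc a N, (if s ≤ t then 0 else t - b) = ∑ t ∈ Ico a s, t - (s - a) * b := by
  have hfilter : (Icc a N).filter (fun t => ¬ s ≤ t) = Ico a s := by
    ext t
    simp only [mem_filter, mem_Icc, mem_Ico]
    omega
  rw [sum_ite, sum_const_zero, zero_add, hfilter, sum_sub_distrib, sum_const,
    Int.card_Ico, nsmul_eq_mul, Int.toNat_of_nonneg (by omega)]

theorem AgeFeas1.age1_eq {n : ℕ} {T0 : ℤ} {S : Fin n → ℤ} (hS : AgeFeas1 n T0 S)
    (b0 : Fin n → ℤ) :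
    Age1 n T0 b0 S = ∑ s ∈ Icc (T0 + 1) (T0 + n), ∑ t ∈ Ico T0 s, t
      + T0 * ∑ i, b0 i - ∑ i, b0 i * S i := by
  obtain ⟨hmem, hinj, hsurj⟩ := hS
  have hreceiver (i : Fin n) := sum_Icc_ite_le_eq (a := T0) (N := T0 + n) (s := S i) (b := b0 i)
    (by linarith [(mem_Icc.mp (hmem i)).1]) (by linarith [(mem_Icc.mp (hmem i)).2])
  rw [Age1, sum_congr rfl fun i _ => hreceiver i, sum_sub_distrib,
    sum_comp_eq_sum_of_bijective_onto hmem hinj hsurj (fun s => ∑ t ∈ Ico T0 s, t)]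
  simp only [sub_mul, sum_sub_distrib, mul_sum, mul_comm (S _)]
  ring

theorem single_message_minAge_general
    (n : ℕ) (T0 : ℤ) (b0 : Fin n → ℤ) :
    (∀ Sjob : Fin n → ℕ, JobFeas1 n Sjob →
      ∑ i, (Sjob i) ^ 2 = ∑ t ∈ Finset.Icc 1 n, t ^ 2) ∧
    (∀ S : Fin n → ℤ, AgeFeas1 n T0 S →
      (∀ i j, S i < S j → b0 i ≤ b0 j) →
      ∀ S' : Fin n → ℤ, AgeFeas1 n T0 S' →
        Age1 n T0 b0 S ≤ Age1 n T0 b0 S') := by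
  refine ⟨fun Sjob ⟨hmem, hinj, hsurj⟩ =>
    sum_comp_eq_sum_of_bijective_onto hmem hinj hsurj (· ^ 2), ?_⟩
  intro S hS hmono S' hS'
  obtain ⟨σ, hσ⟩ := Equiv.Perm.exists_comp_eq_of_injective hS'.2.1
    (fun i => hS.2.2 _ (hS'.1 i))
  have hrearrange : ∑ i, b0 i * S' i ≤ ∑ i, b0 i * S i := by
    simpa only [hσ] using
      (show Monovary b0 S from fun i j h => hmono i j h).sum_mul_comp_perm_le_sum_mul (σ := σ)
  rw [hS.age1_eq, hS'.age1_eq]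
  linarith

/-- If every sender has exactly one message, then in the corresponding Min-WCS
instance every chain is a single job and `cs` is the constant `∑ t²`; and the
Min-Age problem is solved optimally by any feasible schedule transmitting
messages in nondecreasing order of the initial birthday `b0`. -/
theorem single_message_minAge
    (n : ℕ) (T0 : ℤ) (b0 b1 : Fin n → ℤ)
    (hb0 : ∀ i, 0 ≤ b0 i) (hb01 : ∀ i, b0 i < b1 i) (hb1 : ∀ i, b1 i ≤ T0) :
    (∀ Sjob : Fin n → ℕ, JobFeas1 n Sjob →
      ∑ i, (Sjob i) ^ 2 = ∑ t ∈ Finset.Icc 1 n, t ^ 2) ∧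
    (∀ S : Fin n → ℤ, AgeFeas1 n T0 S →
      (∀ i j, S i < S j → b0 i ≤ b0 j) →
      ∀ S' : Fin n → ℤ, AgeFeas1 n T0 S' →
        Age1 n T0 b0 S ≤ Age1 n T0 b0 S') :=
  single_message_minAge_general n T0 b0
end
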